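/- arXiv:1906.06036 — 5 statements merged into one kernel-verified Lean document; each statement's English description precedes it below -/
import Mathlib

section
/- Let d < n be relatively prime positive integers and let ℓ = s(n, d) be the sum of the quotients obtained when the Euclidean algorithm is run on (n, d). Then there exists a finite poset P of width at most 2 with at most ℓ elements such that e(P) = n. -/
/-- The number of linear extensions of a finite poset `P`: the number of
order-preserving bijections from `P` to the chain `Fin |P|`. -/
noncomputable def extNum (P : Type*) [instF : Fintype P] [instO : PartialOrder P] : ℕ :=
  Nat.card {f : P ≃ Fin (Fintype.card P) // ∀ x y : P, x ≤ y → f x ≤ f y}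

/-- The sequence of quotients produced by the Euclidean algorithm run on `(n, d)`. -/
def euclidQuotients : ℕ → ℕ → List ℕ
  | _, 0 => []
  | n, d + 1 => n / (d + 1) :: euclidQuotients (d + 1) (n % (d + 1))
termination_by n d => d
decreasing_by exact Nat.mod_lt _ (Nat.succ_pos d)

/-- `s(n, d)`: the sum of the quotients produced by the Euclidean algorithm on `(n, d)`. -/
def quotSum (n d : ℕ) : ℕ := (euclidQuotients n d).sum

/-!
Let `t` be a maximal element of a finite poset `P`, and adjoin a new element `apex` above every
element except `t`. A linear extension of the new poset `P'` ends in `apex` or in `t`; deleting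
that last element gives `e(P') = e(P) + e(P ∖ t)`, and `P' ∖ t` is `P ∖ t` with a top adjoined,
so `e(P' ∖ t) = e(P ∖ t)`, while `P' ∖ apex = P`. The width stays at most two. Hence with
`X = e(P)` and `Y = e(P ∖ t)`, adjoining `s` elements one after the other above all but `t` turns
`(X, Y)` into `(X + sY, Y)`, or into `(X + sY, X + (s - 1)Y)` if the last new element replaces `t`.
From a single point, `(1, 1)`, these moves run the Euclidean algorithm backwards: a quotient `q`
costs `q` elements and leads from `(v + r, v)` to `(u + v, u)` with `u = qv + r`; the first
quotient `q` of `(n, d)` needs only `q - 1` elements, to reach `e = n` from `(d + r, d)`.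
-/

open Fintype

section Width

def WidthLE (P : Type*) [LE P] (w : ℕ) : Prop :=
  ∀ A : Set P, IsAntichain (· ≤ ·) A → A.ncard ≤ w

variable {P Q : Type*} [LE P] [LE Q] {w : ℕ}

theorem WidthLE.of_orderIso (h : WidthLE P w) (e : P ≃o Q) : WidthLE Q w := fun A hA => by
  rw [← Set.ncard_preimage_of_injective_subset_range e.injective (by simp)]
  exact h _ (hA.preimage_iso e)

end Width

theorem exists_optionEquiv_of_range_eq_compl {P Q : Type*} {j : Q → P} (hj : j.Injective)
    {x : P} (hrange : Set.range j = {x}ᶜ) :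
    ∃ e : Option Q ≃ P, e none = x ∧ ∀ q, e (some q) = j q := by
  have mem_range {p : P} : p ∈ Set.range j ↔ p ≠ x := by rw [hrange]; rfl
  have hbij : Function.Bijective fun o : Option Q => o.elim x j := by
    refine ⟨?_, fun p => ?_⟩
    · rintro (_ | q) (_ | q') h
      · rfl
      · exact absurd h.symm (mem_range.mp ⟨q', rfl⟩)
      · exact absurd h (mem_range.mp ⟨q, rfl⟩)
      · exact congrArg some (hj h)
    · by_cases hp : p = x
      · exact ⟨none, hp.symm⟩
      · obtain ⟨q, rfl⟩ := mem_range.mpr hp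
        exact ⟨some q, rfl⟩
  exact ⟨Equiv.ofBijective _ hbij, rfl, fun _ => rfl⟩

abbrev LinExt (P : Type*) [PartialOrder P] (k : ℕ) := {f : P ≃ Fin k // Monotone f}

theorem exists_linExt_castSucc_eq {P Q : Type*} [PartialOrder P] [Fintype Q] [PartialOrder Q]
    {x : P} (j : Q ↪o P) (hj : Set.range j = {x}ᶜ) {k : ℕ} (hk : card Q = k)
    (f : LinExt P (k + 1)) (hfx : f.1 x = Fin.last k) :
    ∃ g : LinExt Q k, ∀ q, (g.1 q).castSucc = f.1 (j q) := by
  have hne (q : Q) : f.1 (j q) ≠ Fin.last k := fun h =>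
    (show j q ∈ ({x}ᶜ : Set P) from hj ▸ ⟨q, rfl⟩) (f.1.injective (h.trans hfx.symm))
  let g₀ (q : Q) : Fin k := (f.1 (j q)).castPred (hne q)
  have hg₀ : Function.Injective g₀ := fun q q' h =>
    j.injective (f.1.injective (Fin.castPred_inj.mp h))
  let g : Q ≃ Fin k := Equiv.ofBijective g₀
    ((Fintype.bijective_iff_injective_and_card g₀).mpr ⟨hg₀, by simp [hk]⟩)
  exact ⟨⟨g, fun q q' h => show g₀ q ≤ g₀ q' from f.2 (j.monotone h)⟩,
    fun q => Fin.castSucc_castPred _ (hne q)⟩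

section LinearExtensions

variable {P Q : Type*} [Fintype P] [PartialOrder P] [Fintype Q] [PartialOrder Q]

theorem extNum_eq_card_linExt {k : ℕ} (h : card P = k) : extNum P = Nat.card (LinExt P k) := by
  subst h
  exact Nat.card_congr
    (Equiv.subtypeEquivRight fun _ => ⟨fun hf _ _ => hf _ _, fun hf _ _ h => hf h⟩)

theorem extNum_congr (e : P ≃o Q) : extNum P = extNum Q := by
  rw [extNum_eq_card_linExt rfl, extNum_eq_card_linExt (card_congr e.toEquiv).symm]
  refine Nat.card_congr (Equiv.subtypeEquiv (Equiv.equivCongr e.toEquiv (Equiv.refl _)) ?_)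
  intro f
  refine ⟨fun hf a b hab => hf (e.symm.monotone hab), fun hf a b hab => ?_⟩
  simpa using hf (e.monotone hab)

noncomputable def topCount (P : Type*) [Fintype P] [PartialOrder P] (t : P) : ℕ :=
  Nat.card {f : LinExt P (card P) // ∀ a, f.1 a ≤ f.1 t}

theorem topCount_eq_card {k : ℕ} (h : card P = k) (t : P) :
    topCount P t = Nat.card {f : LinExt P k // ∀ a, f.1 a ≤ f.1 t} := by
  subst h; rfl

theorem extNum_eq_sum_topCount [Nonempty P] (S : Finset P) (hS : ∀ a, ∃ s ∈ S, a ≤ s) :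
    extNum P = ∑ s ∈ S, topCount P s := by
  classical
  have hk : 0 < card P := card_pos
  let top (f : LinExt P (card P)) : P := f.1.symm ⟨card P - 1, by omega⟩
  have top_spec (f : LinExt P (card P)) (a : P) : f.1 a ≤ f.1 (top f) := by
    simp only [top, Equiv.apply_symm_apply, Fin.le_def]; omega
  have mem_iff (f : LinExt P (card P)) (s : P) : (∀ a, f.1 a ≤ f.1 s) ↔ s = top f := by
    refine ⟨fun h => f.1.injective (le_antisymm (top_spec f s) (h _)), ?_⟩
    rintro rfl; exact top_spec f
  have hcover : (Finset.univ : Finset (LinExt P (card P))) =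
      S.biUnion fun s => Finset.univ.filter fun f => ∀ a, f.1 a ≤ f.1 s := by
    ext f
    obtain ⟨s, hs, hle⟩ := hS (top f)
    have : s = top f := (mem_iff f s).mp fun a => (top_spec f a).trans (f.2 hle)
    simp only [Finset.mem_univ, Finset.mem_biUnion, Finset.mem_filter, true_and, true_iff]
    exact ⟨s, hs, this ▸ top_spec f⟩
  rw [extNum_eq_card_linExt rfl, Nat.card_eq_fintype_card, ← Finset.card_univ, hcover,
    Finset.card_biUnion]
  · simp only [topCount, Nat.card_eq_fintype_card, Fintype.card_subtype]
  · intro s _ s' _ hne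
    simp only [Function.onFun, Finset.disjoint_filter]
    intro f _ h h'
    exact hne ((mem_iff f s).mp h |>.trans ((mem_iff f s').mp h').symm)

theorem topCount_eq_extNum {x : P} (hx : IsMax x) (j : Q ↪o P) (hj : Set.range j = {x}ᶜ) :
    topCount P x = extNum Q := by
  have mem_range {p : P} : p ∈ Set.range j ↔ p ≠ x := by rw [hj]; rfl
  have hjx (q : Q) : j q ≠ x := mem_range.mp ⟨q, rfl⟩
  obtain ⟨e₀, he₀x, he₀⟩ := exists_optionEquiv_of_range_eq_compl j.injective hj
  have hcard : card P = card Q + 1 := by rw [← card_option]; exact (card_congr e₀).symm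
  rw [topCount_eq_card hcard, extNum_eq_card_linExt rfl]
  set k := card Q
  let extend (g : Q ≃ Fin k) : P ≃ Fin (k + 1) :=
    e₀.symm.trans (g.optionCongr.trans finSuccEquivLast.symm)
  have extend_j (g : Q ≃ Fin k) (q : Q) : extend g (j q) = (g q).castSucc := by
    simp [extend, e₀.symm_apply_eq.mpr (he₀ q).symm]
  have extend_x (g : Q ≃ Fin k) : extend g x = Fin.last k := by
    simp [extend, e₀.symm_apply_eq.mpr he₀x.symm]
  have extend_mono (g : LinExt Q k) : Monotone (extend g.1) := by
    intro a b hab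
    obtain rfl | ⟨q', rfl⟩ := eq_or_ne b x |>.imp_right mem_range.mpr
    · rw [extend_x]; exact Fin.le_last _
    obtain rfl | ⟨q, rfl⟩ := eq_or_ne a x |>.imp_right mem_range.mpr
    · exact (hjx q' (le_antisymm (hx hab) hab)).elim
    rw [extend_j, extend_j, Fin.castSucc_le_castSucc_iff]
    exact g.2 (j.le_iff_le.mp hab)
  symm
  refine Nat.card_eq_of_bijective
    (fun g => ⟨⟨extend g.1, extend_mono g⟩, fun a => by rw [extend_x]; exact Fin.le_last _⟩)
    ⟨fun g g' h => ?_, fun f => ?_⟩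
  · have h' : extend g.1 = extend g'.1 := congrArg (fun f => f.1.1) h
    exact Subtype.ext <| Equiv.ext fun q =>
      Fin.castSucc_injective _ (by rw [← extend_j, ← extend_j, h'])
  · obtain ⟨f, hftop⟩ := f
    have hfx : f.1 x = Fin.last k :=
      Fin.last_le_iff.mp (by simpa using hftop (f.1.symm (Fin.last k)))
    obtain ⟨g, hg⟩ := exists_linExt_castSucc_eq j hj rfl f hfx
    refine ⟨g, Subtype.ext (Subtype.ext (Equiv.ext fun p => ?_))⟩
    obtain rfl | ⟨q, rfl⟩ := eq_or_ne p x |>.imp_right mem_range.mpr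
    · exact (extend_x g.1).trans hfx.symm
    · exact (extend_j g.1 q).trans (hg q)

theorem extNum_eq_topCount {t : P} (ht : ∀ a, a ≤ t) : extNum P = topCount P t := by
  have : Nonempty P := ⟨t⟩
  simpa using extNum_eq_sum_topCount {t} fun a => ⟨t, Finset.mem_singleton_self t, ht a⟩

theorem extNum_of_subsingleton [Subsingleton P] : extNum P = 1 := by
  have hcard : card P ≤ 1 := card_le_one_iff_subsingleton.mpr inferInstance
  refine Nat.card_eq_one_iff_unique.mpr
    ⟨⟨fun f g => Subtype.ext (Equiv.ext fun a => ?_)⟩, ?_⟩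
  · exact Fin.ext (by have := (f.1 a).isLt; have := (g.1 a).isLt; omega)
  · exact ⟨⟨equivFin P, fun a b _ => by rw [Subsingleton.elim a b]⟩⟩

theorem extNum_withTop : extNum (WithTop P) = extNum P := by
  rw [extNum_eq_topCount fun _ => le_top, topCount_eq_extNum isMax_top WithTop.coeOrderHom]
  ext x
  induction x <;> simp [WithTop.coeOrderHom]

end LinearExtensions

/-- `apex` lies above every `a` with `¬ t ≤ a`, that is, above all but `t` when `t` is maximal;
this form keeps the order transitive for every `t`. -/
inductive WithTopExcept {α : Type*} (t : α) : Type _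
  | some (a : α)
  | apex

namespace WithTopExcept

variable {α : Type*} {t : α}

def equivOption : WithTopExcept t ≃ Option α where
  toFun | some a => .some a | apex => none
  invFun | .some a => some a | none => apex
  left_inv x := by cases x <;> rfl
  right_inv x := by cases x <;> rfl

instance [Fintype α] : Fintype (WithTopExcept t) := Fintype.ofEquiv _ equivOption.symm

theorem card_eq [Fintype α] : card (WithTopExcept t) = card α + 1 := by
  rw [card_congr equivOption, card_option]

instance : Nonempty (WithTopExcept t) := ⟨apex⟩

variable [PartialOrder α]

instance : LE (WithTopExcept t) where
  le
    | some a, some b => a ≤ b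
    | some a, apex => ¬ t ≤ a
    | apex, some _ => False
    | apex, apex => True

@[simp] theorem some_le_some {a b : α} : (some a : WithTopExcept t) ≤ some b ↔ a ≤ b :=
  Iff.rfl

@[simp] theorem some_le_apex {a : α} : (some a : WithTopExcept t) ≤ apex ↔ ¬ t ≤ a :=
  Iff.rfl

@[simp] theorem not_apex_le_some {a : α} : ¬ (apex : WithTopExcept t) ≤ some a := id
@[simp] theorem apex_le_apex : (apex : WithTopExcept t) ≤ apex := trivial

instance : PartialOrder (WithTopExcept t) where
  le_refl x := by cases x <;> simp
  le_trans x y z := by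
    cases x <;> cases y <;> cases z <;> simp
    · exact le_trans
    · exact fun hab htb hta => htb (hta.trans hab)
  le_antisymm x y := by
    cases x <;> cases y <;> simp
    exact le_antisymm

def someEmbedding : α ↪o WithTopExcept t := OrderEmbedding.ofMapLEIff some fun _ _ => Iff.rfl

theorem range_someEmbedding : Set.range (someEmbedding : α ↪o WithTopExcept t) = {apex}ᶜ := by
  ext x; cases x <;> simp [someEmbedding]

theorem isMax_apex : IsMax (apex : WithTopExcept t) := by
  intro x; cases x <;> simp

theorem topCount_apex [Fintype α] : topCount (WithTopExcept t) apex = extNum α :=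
  topCount_eq_extNum isMax_apex someEmbedding range_someEmbedding

variable (ht : IsMax t)
include ht

theorem isMax_some : IsMax (some t : WithTopExcept t) := by
  intro x; cases x <;> simp
  exact fun h => ht h

theorem le_apex_or_le_some (x : WithTopExcept t) : x ≤ apex ∨ x ≤ some t := by
  cases x with
  | apex => simp
  | some a =>
    by_cases ha : t ≤ a
    · exact .inr (some_le_some.mpr (ht ha))
    · exact .inl (some_le_apex.mpr ha)

theorem widthLE {w : ℕ} (hw : 2 ≤ w) (h : WidthLE α w) : WidthLE (WithTopExcept t) w := by
  intro A hA
  by_cases hapex : apex ∈ A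
  · have hsub : A ⊆ {apex, some t} := by
      intro x hx
      cases x with
      | apex => simp
      | some a =>
        have : a = t := by
          by_contra hat
          exact hA hx hapex (by simp) (some_le_apex.mpr fun hta => hat (ht.eq_of_ge hta))
        simp [this]
    calc A.ncard ≤ ({apex, some t} : Set _).ncard := Set.ncard_le_ncard hsub
      _ ≤ 2 := (Set.ncard_insert_le _ _).trans (by simp)
      _ ≤ w := hw
  · have hsub : A ⊆ Set.range (someEmbedding : α ↪o WithTopExcept t) := by
      intro x hx
      cases x with
      | apex => exact absurd hx hapex
      | some a => exact ⟨a, rfl⟩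
    rw [← Set.ncard_preimage_of_injective_subset_range someEmbedding.injective hsub]
    exact h _ (hA.preimage_embedding _)

def withTopEmbedding : WithTop {a // a ≠ t} ↪o WithTopExcept t :=
  OrderEmbedding.ofMapLEIff (WithTop.recTopCoe apex fun a => some a.1) fun x y => by
    induction x <;> induction y <;> simp
    case coe.top a => exact fun h => a.2 (ht.eq_of_ge h)

theorem range_withTopEmbedding : Set.range (withTopEmbedding ht) = {some t}ᶜ := by
  ext x
  cases x with
  | apex => simpa using ⟨⊤, rfl⟩
  | some a =>
    refine ⟨?_, fun ha => ⟨(⟨a, by simpa using ha⟩ : {a // a ≠ t}), rfl⟩⟩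
    rintro ⟨x, hx⟩
    induction x with
    | top => cases hx
    | coe b => cases hx; simpa using b.2


variable [Fintype α]

theorem topCount_some : topCount (WithTopExcept t) (some t) = topCount α t := by
  classical
  rw [topCount_eq_extNum (isMax_some ht) (withTopEmbedding ht) (range_withTopEmbedding ht),
    extNum_withTop, topCount_eq_extNum ht (OrderEmbedding.subtype (· ≠ t))]
  ext; simp

theorem extNum_eq : extNum (WithTopExcept t) = extNum α + topCount α t := by
  classical
  rw [extNum_eq_sum_topCount {apex, some t} fun x => (le_apex_or_le_some ht x).elim
      (⟨apex, by simp, ·⟩) (⟨some t, by simp, ·⟩),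
    Finset.sum_pair (by simp), topCount_apex, topCount_some ht]

end WithTopExcept

def Realizable (c X Y : ℕ) : Prop :=
  ∃ (α : Type) (_ : Fintype α) (_ : PartialOrder α) (t : α),
    IsMax t ∧ card α = c ∧ WidthLE α 2 ∧ extNum α = X ∧ topCount α t = Y

namespace Realizable

theorem point : Realizable 1 1 1 := by
  refine ⟨Unit, inferInstance, inferInstance, (), fun _ _ => le_rfl, rfl, fun A _ => ?_,
    extNum_of_subsingleton, ?_⟩
  · exact (Set.ncard_le_card A).trans (by simp)
  · rw [← extNum_eq_topCount fun _ => le_rfl, extNum_of_subsingleton]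

variable {c X Y : ℕ}

theorem grow (h : Realizable c X Y) :
    Realizable (c + 1) (X + Y) Y ∧ Realizable (c + 1) (X + Y) X := by
  obtain ⟨α, _, _, t, ht, rfl, hw, rfl, rfl⟩ := h
  have hW := WithTopExcept.widthLE ht le_rfl hw
  exact ⟨⟨WithTopExcept t, _, _, .some t, WithTopExcept.isMax_some ht, WithTopExcept.card_eq,
      hW, WithTopExcept.extNum_eq ht, WithTopExcept.topCount_some ht⟩,
    ⟨WithTopExcept t, _, _, .apex, WithTopExcept.isMax_apex, WithTopExcept.card_eq,
      hW, WithTopExcept.extNum_eq ht, WithTopExcept.topCount_apex⟩⟩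

theorem grow_iterate (h : Realizable c X Y) (s : ℕ) : Realizable (c + s) (X + s * Y) Y := by
  induction s with
  | zero => simpa using h
  | succ s ih => simpa [add_mul, add_assoc] using ih.grow.1

end Realizable

theorem quotSum_of_pos {u v : ℕ} (hv : 0 < v) : quotSum u v = u / v + quotSum v (u % v) := by
  obtain ⟨v, rfl⟩ := Nat.exists_eq_add_one_of_ne_zero hv.ne'
  rw [quotSum, euclidQuotients, List.sum_cons, quotSum]

theorem add_mod_add_pred_div_mul {u v : ℕ} (hv : 0 < v) (hvu : v ≤ u) :
    v + u % v + (u / v - 1) * v = u := by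
  have h := Nat.div_add_mod u v
  obtain ⟨q, hq⟩ := Nat.exists_eq_add_of_le (Nat.div_pos hvu hv)
  rw [hq] at h
  rw [hq, Nat.add_sub_cancel_left]
  nlinarith

theorem gcd_mod_eq_gcd {u v : ℕ} : Nat.gcd v (u % v) = Nat.gcd u v := by
  rw [Nat.gcd_comm, ← Nat.gcd_rec, Nat.gcd_comm]

theorem realizable_of_gcd_eq_one (v : ℕ) : ∀ u, v ≤ u → Nat.gcd u v = 1 →
    Realizable (1 + quotSum u v) (u + v) u := by
  induction v using Nat.strong_induction_on with
  | _ v ih =>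
  intro u hvu hgcd
  rcases Nat.eq_zero_or_pos v with rfl | hv
  · obtain rfl : u = 1 := by simpa using hgcd
    simpa [quotSum, euclidQuotients] using Realizable.point
  have hstep := ((ih (u % v) (Nat.mod_lt u hv) v (Nat.mod_lt u hv).le
    (gcd_mod_eq_gcd.trans hgcd)).grow_iterate (u / v - 1)).grow.2
  rw [add_mod_add_pred_div_mul hv hvu] at hstep
  convert hstep using 1
  · have := Nat.div_pos hvu hv
    rw [quotSum_of_pos hv]; omega

theorem exists_partialOrder_of_equiv {α β : Type*} [Fintype α] [PartialOrder α] [Fintype β]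
    (e : α ≃ β) {w : ℕ} (h : WidthLE α w) : ∃ r : PartialOrder β,
      (∀ A : Set β, IsAntichain r.le A → A.ncard ≤ w) ∧
      extNum β (instO := r) = extNum α := by
  let r : PartialOrder β := PartialOrder.lift e.symm e.symm.injective
  let iso : α ≃o β :=
    { toEquiv := e
      map_rel_iff' := fun {a b} => by
        change e.symm (e a) ≤ e.symm (e b) ↔ a ≤ b
        simp }
  exact ⟨r, h.of_orderIso iso, (extNum_congr iso).symm⟩

/-- If `d < n` are relatively prime positive integers and `ℓ = s(n, d)`, then there is a
finite poset of width at most `2` with at most `ℓ` elements having exactly `n` linear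
extensions. -/
theorem statement3 (n d : ℕ) (hd : 0 < d) (hdn : d < n) (h : Nat.gcd n d = 1) :
    ∃ k : ℕ, k ≤ quotSum n d ∧ ∃ r : PartialOrder (Fin k),
      (∀ A : Set (Fin k), IsAntichain r.le A → A.ncard ≤ 2) ∧
      extNum (Fin k) (instO := r) = n := by
  have hstart := realizable_of_gcd_eq_one (n % d) d (Nat.mod_lt n hd).le (gcd_mod_eq_gcd.trans h)
  obtain ⟨α, _, _, -, -, hcard, hw, hext, -⟩ := hstart.grow_iterate (n / d - 1)
  obtain ⟨r, hr, hre⟩ := exists_partialOrder_of_equiv (equivFin α) hw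
  refine ⟨card α, ?_, r, hr, hre.trans ?_⟩
  · have := Nat.div_pos hdn.le hd
    rw [hcard, quotSum_of_pos hd]; omega
  · rw [hext, add_mod_add_pred_div_mul hd hdn.le]
end

section
/- Let P be a finite poset with n ≥ 1 elements that is connected (equivalently, P cannot be expressed as the disjoint sum of two nonempty posets). Then e(P) ≤ (n−1)!. -/
/-- The comparability graph of a poset: distinct elements are adjacent iff comparable. -/
def compGraph (P : Type*) [PartialOrder P] : SimpleGraph P where
  Adj x y := x ≠ y ∧ (x ≤ y ∨ y ≤ x)
  symm := ⟨fun _ _ h => ⟨h.1.symm, h.2.symm⟩⟩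
  loopless := ⟨fun _ h => h.1 rfl⟩

/-!
Cyclically shifting the labels of a linear extension `f : P ≃ Fin n` by `k` gives `n` distinct
bijections `P ≃ Fin n`, and distinct linear extensions give disjoint families of shifts. Indeed,
if `f` and its shift by `c ≠ 0` are both monotone, then "the label of `x` does not wrap around
when shifted" is preserved along comparabilities, hence constant on a connected poset; but the
element labelled `0` does not wrap and the element labelled `n - 1` does. So
`e(P) * n ≤ n!`.
-/

open Nat

theorem SimpleGraph.Reachable.iff_of_forall_adj {V : Type*} {G : SimpleGraph V} {p : V → Prop}
    (hp : ∀ x y, G.Adj x y → (p x ↔ p y)) {x y : V} (h : G.Reachable x y) : p x ↔ p y := by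
  obtain ⟨w⟩ := h
  induction w with
  | nil => rfl
  | cons hadj _ ih => exact (hp _ _ hadj).trans ih

theorem Fin.add_lt_iff_of_le_of_add_le {n : ℕ} {a b c : Fin n} (hab : a ≤ b)
    (habc : a + c ≤ b + c) : (a : ℕ) + c < n ↔ (b : ℕ) + c < n := by
  rw [Fin.le_def, Fin.val_add_eq_ite, Fin.val_add_eq_ite] at habc
  rw [Fin.le_def] at hab
  have := b.isLt
  split_ifs at habc <;> omega

section

variable {P : Type*} [PartialOrder P]

theorem eq_zero_of_monotone_of_monotone_add {n : ℕ} [NeZero n] (hconn : (compGraph P).Connected)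
    {f : P → Fin n} (hsurj : f.Surjective) (hf : Monotone f) {c : Fin n}
    (hfc : Monotone fun x => f x + c) : c = 0 := by
  have hle : ∀ x y, x ≤ y → ((f x : ℕ) + c < n ↔ (f y : ℕ) + c < n) := fun x y hxy =>
    Fin.add_lt_iff_of_le_of_add_le (hf hxy) (hfc hxy)
  have hadj : ∀ x y, (compGraph P).Adj x y → ((f x : ℕ) + c < n ↔ (f y : ℕ) + c < n) :=
    fun x y h => h.2.elim (hle x y) fun hyx => (hle y x hyx).symm
  have hn := NeZero.pos n
  obtain ⟨x, hx⟩ := hsurj ⟨0, hn⟩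
  obtain ⟨y, hy⟩ := hsurj ⟨n - 1, by omega⟩
  have hwrap := (hconn.preconnected x y).iff_of_forall_adj hadj
  simp only [hx, hy] at hwrap
  rw [Fin.ext_iff, Fin.val_zero]
  omega

theorem injective_shift_of_connected {n : ℕ} [NeZero n] (hconn : (compGraph P).Connected) :
    Function.Injective fun p : {f : P ≃ Fin n // Monotone f} × Fin n =>
      p.1.1.trans (Equiv.addRight p.2) := by
  rintro ⟨⟨f, hf⟩, k⟩ ⟨⟨g, hg⟩, l⟩ h
  have hfg (x : P) : f x + k = g x + l := DFunLike.congr_fun h x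
  have hg_eq : (fun x => f x + (k - l)) = g := funext fun x => by
    rw [← add_sub_assoc, hfg, add_sub_cancel_right]
  have hkl : k = l := sub_eq_zero.1 <|
    eq_zero_of_monotone_of_monotone_add hconn f.surjective hf (hg_eq ▸ hg)
  subst hkl
  have : f = g := Equiv.ext fun x => add_right_cancel (hfg x)
  subst this
  rfl

variable [Fintype P]

theorem extNum_mul_card_le_factorial (hconn : (compGraph P).Connected) :
    extNum P * Fintype.card P ≤ (Fintype.card P)! := by
  classical
  have := hconn.nonempty
  have : NeZero (Fintype.card P) := ⟨Fintype.card_ne_zero⟩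
  have h := Nat.card_le_card_of_injective _
    (injective_shift_of_connected (n := Fintype.card P) hconn)
  rw [Nat.card_prod, Nat.card_eq_fintype_card (α := P ≃ _),
    Fintype.card_equiv (Fintype.equivFin P), Nat.card_eq_fintype_card (α := Fin _),
    Fintype.card_fin] at h
  exact h

end

theorem statement5_general (P : Type*) [Fintype P] [PartialOrder P]
    (hconn : (compGraph P).Connected) :
    extNum P ≤ Nat.factorial (Fintype.card P - 1) := by
  have hpos : 0 < Fintype.card P := @Fintype.card_pos _ _ hconn.nonempty
  refine Nat.le_of_mul_le_mul_right ?_ hpos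
  calc extNum P * Fintype.card P ≤ (Fintype.card P)! := extNum_mul_card_le_factorial hconn
    _ = (Fintype.card P - 1)! * Fintype.card P := by
      rw [mul_comm, Nat.mul_factorial_pred hpos.ne']

/-- A connected finite poset on `n ≥ 1` elements has at most `(n-1)!` linear extensions. -/
theorem statement5 (P : Type*) [Fintype P] [PartialOrder P]
    (hn : 1 ≤ Fintype.card P) (hconn : (compGraph P).Connected) :
    extNum P ≤ Nat.factorial (Fintype.card P - 1) :=
  statement5_general P hconn
end

section
/- Let P be a connected finite poset with n ≥ 2 elements satisfying e(P) = (n−1)!. Then either P has an element that is strictly below all other elements and the remaining n−1 elements are pairwise incomparable, or P has an element that is strictly above all other elements and the remaining n−1 elements are pairwise incomparable. -/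
theorem SimpleGraph.Preconnected.mem_of_forall_adj {V : Type*} {G : SimpleGraph V}
    (hG : G.Preconnected) {S : Set V} (hS : ∀ u v, G.Adj u v → u ∈ S → v ∈ S) {a : V}
    (ha : a ∈ S) (b : V) : b ∈ S := by
  induction (G.reachable_iff_reflTransGen a b).mp (hG a b) with
  | refl => exact ha
  | tail _ huv ih => exact hS _ _ huv ih

section Numbering

variable {P : Type*} {n : ℕ}

def rotate (L : P ≃ Fin (n + 1)) (k : Fin (n + 1)) : P ≃ Fin (n + 1) :=
  L.trans (Equiv.addRight k)

@[simp]
theorem rotate_apply (L : P ≃ Fin (n + 1)) (k : Fin (n + 1)) (x : P) :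
    rotate L k x = L x + k :=
  rfl

theorem exists_equiv_apply_eq_apply_add_one [Fintype P] (hcard : Fintype.card P = n + 1)
    {m : ℕ} {f : Fin m → P} (hf : Function.Injective f) :
    ∃ σ : P ≃ Fin (n + 1), ∀ i j : Fin m, (j : ℕ) = i + 1 → σ (f j) = σ (f i) + 1 := by
  have hm : m ≤ n + 1 := by simpa [hcard] using Fintype.card_le_of_injective f hf
  let e := Fintype.equivFinOfCardEq hcard
  obtain ⟨π, hπ⟩ := Equiv.Perm.exists_extending_pair (e ∘ f) (Fin.castLE hm)
    (e.injective.comp hf) (Fin.castLE_injective hm)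
  refine ⟨e.trans π, fun i j hij => ?_⟩
  have hi : Fin.castLE hm i < Fin.last n := by
    simp only [Fin.lt_def, Fin.val_castLE, Fin.val_last]
    omega
  simp only [Equiv.trans_apply]
  rw [← Function.comp_apply (f := e), ← Function.comp_apply (f := e), hπ, hπ, Fin.ext_iff,
    Fin.val_add_one_of_lt hi]
  simpa using hij

variable [PartialOrder P]

theorem compGraph_adj_iff {u v : P} : (compGraph P).Adj u v ↔ u < v ∨ v < u := by
  simp only [compGraph, lt_iff_le_and_ne]
  grind

theorem exists_lt_or_lt_of_connected [Nontrivial P] (hconn : (compGraph P).Connected) (u : P) :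
    ∃ v, u < v ∨ v < u := by
  obtain ⟨v, huv⟩ : ∃ v, (compGraph P).Adj u v := by
    simpa [SimpleGraph.IsIsolated] using hconn.preconnected.not_isIsolated u
  exact ⟨v, compGraph_adj_iff.mp huv⟩

theorem eq_zero_of_monotone_add (hconn : (compGraph P).Connected) {L L' : P ≃ Fin (n + 1)}
    (hL : Monotone L) (hL' : Monotone L') {d : Fin (n + 1)} (h : ∀ x, L' x = L x + d) :
    d = 0 := by
  by_contra hd0
  have hd : 0 < (d : ℕ) := Nat.pos_of_ne_zero fun h0 => hd0 (Fin.ext h0)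
  let S : Set P := {x | (L x : ℕ) + d < n + 1}
  have hval : ∀ x, (L' x : ℕ) = if n + 1 ≤ (L x : ℕ) + d then L x + d - (n + 1) else L x + d :=
    fun x => by rw [h x, Fin.val_add_eq_ite]
  have hS : ∀ u v, (compGraph P).Adj u v → u ∈ S → v ∈ S := by
    intro u v huv hu
    by_contra hv
    have hu : (L u : ℕ) + d < n + 1 := hu
    have hv : ¬ (L v : ℕ) + d < n + 1 := hv
    have hu' := hval u
    have hv' := hval v
    rcases compGraph_adj_iff.mp huv with huv | huv
    · have := Fin.le_def.mp (hL' huv.le)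
      split_ifs at hu' hv' <;> omega
    · have := Fin.le_def.mp (hL huv.le)
      omega
  have h0 : L.symm 0 ∈ S := by simpa [S] using d.isLt
  have hlast : L.symm (Fin.last n) ∉ S := by simp [S]; omega
  exact hlast (hconn.preconnected.mem_of_forall_adj hS h0 _)

theorem rotate_injective (hconn : (compGraph P).Connected) {L L' : P ≃ Fin (n + 1)}
    (hL : Monotone L) (hL' : Monotone L') {k k' : Fin (n + 1)}
    (h : rotate L k = rotate L' k') : L = L' ∧ k = k' := by
  have hx (x : P) : L x + k = L' x + k' := by simpa using congrArg (· x) h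
  have hd : k - k' = 0 :=
    eq_zero_of_monotone_add hconn hL hL' fun x => by rw [← add_sub_assoc, hx, add_sub_cancel_right]
  have hk : k = k' := sub_eq_zero.mp hd
  subst hk
  exact ⟨Equiv.ext fun x => add_right_cancel (hx x), rfl⟩

theorem exists_monotone_rotate_eq [Fintype P] (hcard : Fintype.card P = n + 1)
    (hconn : (compGraph P).Connected)
    (hcount : Nat.card {L : P ≃ Fin (n + 1) // Monotone L} = n.factorial) (σ : P ≃ Fin (n + 1)) :
    ∃ L : P ≃ Fin (n + 1), Monotone L ∧ ∃ k, rotate L k = σ := by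
  classical
  let Φ : {L : P ≃ Fin (n + 1) // Monotone L} × Fin (n + 1) → P ≃ Fin (n + 1) :=
    fun Lk => rotate Lk.1 Lk.2
  have hΦ : Function.Injective Φ := by
    rintro ⟨⟨L, hL⟩, k⟩ ⟨⟨L', hL'⟩, k'⟩ h
    obtain ⟨rfl, rfl⟩ := rotate_injective hconn hL hL' h
    rfl
  have hcardΦ : Fintype.card ({L : P ≃ Fin (n + 1) // Monotone L} × Fin (n + 1)) =
      Fintype.card (P ≃ Fin (n + 1)) := by
    rw [Fintype.card_prod, ← Nat.card_eq_fintype_card, hcount, Fintype.card_fin,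
      Fintype.card_equiv (Fintype.equivFinOfCardEq hcard), hcard, Nat.factorial_succ, mul_comm]
  obtain ⟨⟨⟨L, hL⟩, k⟩, hLk⟩ :=
    ((Fintype.bijective_iff_injective_and_card Φ).mpr ⟨hΦ, hcardΦ⟩).surjective σ
  exact ⟨L, hL, k, hLk⟩

theorem eq_last_of_rotate_apply_eq_add_one {L : P ≃ Fin (n + 1)} (hL : Monotone L)
    {k : Fin (n + 1)} {a b : P} (hab : a ≤ b) (h : rotate L k a = rotate L k b + 1) :
    L b = Fin.last n := by
  rw [rotate_apply, rotate_apply, add_right_comm] at h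
  rw [← Fin.add_one_le_iff, ← add_right_cancel h]
  exact hL hab

theorem eq_of_apply_eq_add_one_of_apply_eq_add_one
    (hrot : ∀ σ : P ≃ Fin (n + 1), ∃ L : P ≃ Fin (n + 1), Monotone L ∧ ∃ k, rotate L k = σ)
    (σ : P ≃ Fin (n + 1)) {a b c d : P}
    (hab : a ≤ b) (hσab : σ a = σ b + 1) (hcd : c ≤ d) (hσcd : σ c = σ d + 1) : b = d := by
  obtain ⟨L, hL, k, rfl⟩ := hrot σ
  exact L.injective <| (eq_last_of_rotate_apply_eq_add_one hL hab hσab).trans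
    (eq_last_of_rotate_apply_eq_add_one hL hcd hσcd).symm

theorem not_lt_of_lt_of_forall_rotate [Fintype P] (hcard : Fintype.card P = n + 1)
    (hrot : ∀ σ : P ≃ Fin (n + 1), ∃ L : P ≃ Fin (n + 1), Monotone L ∧ ∃ k, rotate L k = σ)
    {a b c : P} (hab : a < b) : ¬ b < c := by
  intro hbc
  obtain ⟨σ, hσ⟩ := exists_equiv_apply_eq_apply_add_one hcard (f := ![c, b, a]) <| by
    intro i j hij
    fin_cases i <;> fin_cases j <;> simp_all [hab.ne, hbc.ne, (hab.trans hbc).ne, hab.ne',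
      hbc.ne', (hab.trans hbc).ne']
  exact hbc.ne (eq_of_apply_eq_add_one_of_apply_eq_add_one hrot σ hbc.le (hσ 0 1 rfl) hab.le
    (hσ 1 2 rfl)).symm

theorem not_lt_of_lt_of_disjoint_of_forall_rotate [Fintype P] (hcard : Fintype.card P = n + 1)
    (hrot : ∀ σ : P ≃ Fin (n + 1), ∃ L : P ≃ Fin (n + 1), Monotone L ∧ ∃ k, rotate L k = σ)
    {a b c d : P} (hab : a < b) (hac : a ≠ c) (had : a ≠ d) (hbc : b ≠ c) (hbd : b ≠ d) :
    ¬ c < d := by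
  intro hcd
  obtain ⟨σ, hσ⟩ := exists_equiv_apply_eq_apply_add_one hcard (f := ![b, a, d, c]) <| by
    intro i j hij
    fin_cases i <;> fin_cases j <;> simp_all [hab.ne, hcd.ne, hab.ne', hcd.ne', eq_comm]
  exact hbd (eq_of_apply_eq_add_one_of_apply_eq_add_one hrot σ hab.le (hσ 0 1 rfl) hcd.le
    (hσ 2 3 rfl))

theorem forall_lt_eq_right_or_forall_lt_eq_left
    (hchain : ∀ a b c : P, a < b → ¬ b < c)
    (hdisj : ∀ a b c d : P, a < b → a ≠ c → a ≠ d → b ≠ c → b ≠ d → ¬ c < d)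
    {p q : P} (hpq : p < q) :
    (∀ u v : P, u < v → v = q) ∨ ∀ u v : P, u < v → u = p := by
  by_cases hs : ∃ s, s ≠ p ∧ s < q
  · obtain ⟨s, hsp, hsq⟩ := hs
    refine Or.inl fun u v huv => ?_
    by_contra hvq
    rcases eq_or_ne u q with rfl | huq
    · exact hchain _ _ _ hpq huv
    rcases eq_or_ne v p with rfl | hvp
    · exact hchain _ _ _ huv hpq
    rcases eq_or_ne u p with rfl | hup
    · rcases eq_or_ne v s with rfl | hvs
      · exact hchain _ _ _ huv hsq
      · exact hdisj _ _ _ _ hsq hsp (Ne.symm hvs) hpq.ne' (Ne.symm hvq) huv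
    · exact hdisj _ _ _ _ hpq (Ne.symm hup) (Ne.symm hvp) (Ne.symm huq) (Ne.symm hvq) huv
  · push Not at hs
    refine Or.inr fun u v huv => ?_
    by_contra hup
    rcases eq_or_ne v q with rfl | hvq
    · exact hs u hup huv
    rcases eq_or_ne v p with rfl | hvp
    · exact hchain _ _ _ huv hpq
    rcases eq_or_ne u q with rfl | huq
    · exact hchain _ _ _ hpq huv
    · exact hdisj _ _ _ _ hpq (Ne.symm hup) (Ne.symm hvp) (Ne.symm huq) (Ne.symm hvq) huv

theorem forall_lt_and_not_le_of_forall_lt_eq (hconn : ∀ u : P, ∃ v, u < v ∨ v < u) {q : P}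
    (hq : ∀ u v : P, u < v → v = q) :
    (∀ y : P, y ≠ q → y < q) ∧ ∀ y z : P, y ≠ q → z ≠ q → y ≠ z → ¬ y ≤ z := by
  refine ⟨fun y hy => ?_, fun y z _ hz hyz hle => hz (hq y z (hle.lt_of_ne hyz))⟩
  obtain ⟨z, hyz | hzy⟩ := hconn y
  · exact hq y z hyz ▸ hyz
  · exact absurd (hq z y hzy) hy

end Numbering

/-- A connected finite poset on `n ≥ 2` elements with exactly `(n-1)!` linear extensions
either has an element strictly below all others with the remaining elements pairwise
incomparable, or an element strictly above all others with the remaining elements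
pairwise incomparable. -/
theorem statement6 (P : Type*) [Fintype P] [PartialOrder P]
    (hn : 2 ≤ Fintype.card P) (hconn : (compGraph P).Connected)
    (he : extNum P = Nat.factorial (Fintype.card P - 1)) :
    (∃ x : P, (∀ y : P, y ≠ x → x < y) ∧
      ∀ y z : P, y ≠ x → z ≠ x → y ≠ z → ¬ y ≤ z) ∨
    (∃ x : P, (∀ y : P, y ≠ x → y < x) ∧
      ∀ y z : P, y ≠ x → z ≠ x → y ≠ z → ¬ y ≤ z) := by
  obtain ⟨n, hcard⟩ : ∃ n, Fintype.card P = n + 1 := ⟨_, (Nat.sub_add_cancel (by omega)).symm⟩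
  have hcount : Nat.card {L : P ≃ Fin (n + 1) // Monotone L} = n.factorial := by
    unfold extNum at he
    rw [hcard] at he
    exact he
  have : Nontrivial P := Fintype.one_lt_card_iff_nontrivial.mp (by omega)
  have hadj := exists_lt_or_lt_of_connected hconn
  have hrot := exists_monotone_rotate_eq hcard hconn hcount
  obtain ⟨p, q, hpq⟩ : ∃ p q : P, p < q := by
    obtain ⟨v, huv | hvu⟩ := hadj (Classical.arbitrary P)
    exacts [⟨_, v, huv⟩, ⟨v, _, hvu⟩]
  rcases forall_lt_eq_right_or_forall_lt_eq_left
      (fun _ _ _ => not_lt_of_lt_of_forall_rotate hcard hrot)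
      (fun _ _ _ _ => not_lt_of_lt_of_disjoint_of_forall_rotate hcard hrot) hpq with hq | hp
  · exact Or.inr ⟨q, forall_lt_and_not_le_of_forall_lt_eq hadj hq⟩
  · obtain ⟨hbelow, hanti⟩ := forall_lt_and_not_le_of_forall_lt_eq (P := Pᵒᵈ) (q := OrderDual.toDual p)
      (fun u => (hadj u).imp fun _ => Or.symm) (fun u v huv => hp v u huv)
    exact Or.inl ⟨p, hbelow, fun y z hy hz hyz => hanti z y hz hy hyz.symm⟩
end

section
/- Let P be a finite poset with n ≥ 1 elements, let C be a connected component of P of maximal size, and let m be the number of connected components of P other than C that consist of a single element. Then e(P) ≤ n!/(n−m). -/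
/-!
If the components of `P` have sizes `n₁, …, n_k`, then `e(P) · ∏ nᵢ ≤ n!`. Indeed, starting from a
linear extension, rotate cyclically, independently for each component, the set of positions that
the component occupies; this gives `∏ nᵢ` bijections `P ≃ Fin n`, and all bijections obtained from
all linear extensions are distinct, because two linear extensions of a connected poset never differ
by a nontrivial cyclic shift: along a path joining the elements at the bottom and at the top of the
shift, some comparable pair would have to straddle the wrap-around point.

It remains to see `n - m ≤ ∏ nᵢ`. The sizes not counted by `m` are `|C|` and those of the other
non-singleton components, summing to `n - m`. If `|C| ≥ 2` they are all at least `2`, and a sum of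
integers `≥ 2` is at most their product; if `|C| = 1`, every component is a singleton and
`n - m = 1`.
-/

open Finset SimpleGraph

theorem eq_of_add_eq_of_monotone {Q : Type*} [PartialOrder Q] (hQ : (compGraph Q).Preconnected)
    {k : ℕ} {v w : Q → Fin k} (hv : Monotone v) (hw : Monotone w)
    (hv_surj : Function.Surjective v) {a b : Fin k} (hvw : ∀ x, v x + a = w x + b) :
    a = b := by
  have : NeZero k := ⟨a.pos.ne'⟩
  set t := a - b
  have hwv : ∀ x, w x = v x + t := fun x => by
    rw [← add_sub_assoc, hvw, add_sub_cancel_right]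
  by_contra hab
  have ht : (t : ℕ) ≠ 0 := fun h => hab (sub_eq_zero.1 (Fin.ext h))
  obtain ⟨y, hy⟩ := hv_surj 0
  obtain ⟨z, hz⟩ := hv_surj ⟨k - 1, by omega⟩
  obtain ⟨d, -, hd_fst, hd_snd⟩ := (hQ y z).some.exists_boundary_dart {x | (v x : ℕ) + t < k}
    (by simp [hy, t.isLt]) (by simp only [Set.mem_ofPred_eq, hz, not_lt]; omega)
  simp only [Set.mem_ofPred_eq, not_lt] at hd_fst hd_snd
  rcases d.adj.2 with hle | hle
  · -- `v + t` wraps around at `d.snd` but not at `d.fst`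
    have := hw hle
    rw [hwv, hwv, Fin.le_def, Fin.val_add_eq_ite, Fin.val_add_eq_ite] at this
    split_ifs at this <;> omega
  · have := hv hle
    rw [Fin.le_def] at this
    omega

theorem SimpleGraph.ConnectedComponent.preconnected_compGraph_supp {P : Type*} [PartialOrder P]
    (D : (compGraph P).ConnectedComponent) : (compGraph D.supp).Preconnected :=
  D.connected_toSimpleGraph.preconnected.mono fun _ _ (h : (compGraph P).Adj _ _) =>
    ⟨fun e => h.1 (congrArg Subtype.val e), h.2⟩

section RotateSlots

variable {β κ : Type*} [LinearOrder β] [Fintype β] [DecidableEq κ] (s : β → κ) {m : κ → ℕ}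
  (hs : ∀ D, Fintype.card {b // s b = D} = m D)

def slotIso (D : κ) : Fin (m D) ≃o {b // s b = D} :=
  Fintype.orderIsoFinOfCardEq _ (hs D)

def rotateSlots (ρ : ∀ D, Fin (m D)) (b : β) : β :=
  slotIso s hs (s b) ((slotIso s hs (s b)).symm ⟨b, rfl⟩ + ρ (s b))

variable (ρ : ∀ D, Fin (m D))

theorem apply_rotateSlots (b : β) : s (rotateSlots s hs ρ b) = s b :=
  (slotIso s hs (s b) _).2

theorem slotIso_symm_rotateSlots {b : β} {D : κ} (hb : s b = D) :
    (slotIso s hs D).symm ⟨rotateSlots s hs ρ b, (apply_rotateSlots s hs ρ b).trans hb⟩ =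
      (slotIso s hs D).symm ⟨b, hb⟩ + ρ D := by
  subst hb
  exact (slotIso s hs (s b)).symm_apply_apply _

theorem rotateSlots_injective : Function.Injective (rotateSlots s hs ρ) := by
  intro b c h
  have hbc : s b = s c := by
    rw [← apply_rotateSlots s hs ρ b, h, apply_rotateSlots s hs ρ c]
  have := slotIso_symm_rotateSlots s hs ρ hbc
  simp only [h, slotIso_symm_rotateSlots s hs ρ rfl, add_left_inj] at this
  exact congrArg Subtype.val ((slotIso s hs (s c)).symm.injective this).symm

noncomputable def rotateSlotsEquiv : β ≃ β :=
  Equiv.ofBijective _ (rotateSlots_injective s hs ρ).bijective_of_finite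

end RotateSlots

theorem rotateSlotsEquiv_congr {β κ : Type*} [LinearOrder β] [Fintype β] [DecidableEq κ]
    {m : κ → ℕ} {s s' : β → κ} (h : s = s') (hs : ∀ D, Fintype.card {b // s b = D} = m D)
    (hs' : ∀ D, Fintype.card {b // s' b = D} = m D) (ρ : ∀ D, Fin (m D)) :
    rotateSlotsEquiv s hs ρ = rotateSlotsEquiv s' hs' ρ := by
  subst h
  rfl

section RotateWithin

variable {α β κ : Type*} [Fintype β] [DecidableEq κ] (c : α → κ)

theorem card_fiber_comp_symm (f : α ≃ β) (D : κ) :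
    Fintype.card {b // c (f.symm b) = D} = Nat.card {x // c x = D} := by
  rw [← Nat.card_eq_fintype_card]
  exact Nat.card_congr (f.symm.subtypeEquiv fun _ => Iff.rfl)

variable [LinearOrder β]

noncomputable def rotateWithin (f : α ≃ β) (ρ : ∀ D, Fin (Nat.card {x // c x = D})) : α ≃ β :=
  f.trans (rotateSlotsEquiv (c ∘ f.symm) (card_fiber_comp_symm c f) ρ)

theorem apply_symm_rotateWithin (f : α ≃ β) (ρ : ∀ D, Fin (Nat.card {x // c x = D})) (x : α) :
    c (f.symm (rotateWithin c f ρ x)) = c x :=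
  (apply_rotateSlots (c ∘ f.symm) (card_fiber_comp_symm c f) ρ (f x)).trans (by simp)

theorem comp_symm_rotateWithin (f : α ≃ β) (ρ : ∀ D, Fin (Nat.card {x // c x = D})) :
    c ∘ (rotateWithin c f ρ).symm = c ∘ f.symm := by
  funext b
  obtain ⟨x, rfl⟩ := (rotateWithin c f ρ).surjective b
  simp [apply_symm_rotateWithin]

theorem rotateWithin_injective [PartialOrder α]
    (hc : ∀ D, (compGraph {x // c x = D}).Preconnected) :
    Function.Injective fun p : {f : α ≃ β // Monotone f} × (∀ D, Fin (Nat.card {x // c x = D})) =>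
      rotateWithin c p.1.1 p.2 := by
  rintro ⟨⟨f, hf⟩, ρ⟩ ⟨⟨f', hf'⟩, ρ'⟩ h
  simp only at h
  set s := c ∘ f.symm
  have hs : c ∘ f'.symm = s := by
    rw [← comp_symm_rotateWithin c f' ρ', ← h, comp_symm_rotateWithin]
  set R := rotateSlotsEquiv s (card_fiber_comp_symm c f)
  have hR : ∀ x, R ρ (f x) = R ρ' (f' x) := fun x => by
    simpa [rotateWithin, rotateSlotsEquiv_congr hs (card_fiber_comp_symm c f')
      (card_fiber_comp_symm c f) ρ'] using congrArg (· x) h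
  have hρ : ρ = ρ' := by
    funext D
    set e := slotIso s (card_fiber_comp_symm c f) D
    have hmem : ∀ {g : α ≃ β}, c ∘ g.symm = s → ∀ x : {x // c x = D}, s (g x) = D :=
      fun hg x => by rw [← hg]; simpa using x.2
    refine eq_of_add_eq_of_monotone (hc D) (v := fun x => e.symm ⟨f x, hmem rfl x⟩)
      (w := fun x => e.symm ⟨f' x, hmem hs x⟩) (fun x y hxy => e.symm.monotone (hf hxy))
      (fun x y hxy => e.symm.monotone (hf' hxy)) (fun i => ⟨⟨f.symm (e i), (e i).2⟩, ?_⟩)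
      fun x => ?_
    · simp
    · rw [← slotIso_symm_rotateSlots s _ ρ (hmem rfl x),
        ← slotIso_symm_rotateSlots s _ ρ' (hmem hs x)]
      exact congrArg e.symm (Subtype.ext (hR x))
  subst hρ
  have : f = f' := Equiv.ext fun x => (R ρ).injective (hR x)
  subst this
  rfl

end RotateWithin

theorem extNum_mul_prod_card_le {α κ : Type*} [Fintype α] [PartialOrder α] [Fintype κ]
    [DecidableEq κ] (c : α → κ) (hc : ∀ D, (compGraph {x // c x = D}).Preconnected) :
    extNum α * ∏ D, Nat.card {x // c x = D} ≤ (Fintype.card α).factorial := by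
  classical
  have h := Nat.card_le_card_of_injective _
    (rotateWithin_injective (β := Fin (Fintype.card α)) c hc)
  rw [Nat.card_prod, Nat.card_pi, Nat.card_eq_fintype_card (α := α ≃ _),
    Fintype.card_equiv (Fintype.equivFin α)] at h
  simp only [Nat.card_fin] at h
  exact h

theorem extNum_mul_prod_ncard_supp_le {P : Type*} [Fintype P] [PartialOrder P]
    [Fintype (compGraph P).ConnectedComponent] [DecidableEq (compGraph P).ConnectedComponent] :
    extNum P * ∏ D : (compGraph P).ConnectedComponent, D.supp.ncard ≤
      (Fintype.card P).factorial := by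
  simp only [← Nat.card_coe_set_eq]
  exact extNum_mul_prod_card_le _ ConnectedComponent.preconnected_compGraph_supp

theorem SimpleGraph.ConnectedComponent.sum_ncard_supp {V : Type*} [Fintype V] {G : SimpleGraph V}
    [Fintype G.ConnectedComponent] : ∑ D : G.ConnectedComponent, D.supp.ncard = Fintype.card V := by
  rw [← Nat.card_eq_fintype_card, ← Nat.card_congr (Equiv.sigmaFiberEquiv G.connectedComponentMk),
    Nat.card_sigma]
  simp only [← Nat.card_coe_set_eq]
  rfl

theorem sum_le_prod_of_two_le {ι : Type*} (s : Finset ι) {f : ι → ℕ} (hf : ∀ i ∈ s, 2 ≤ f i) :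
    ∑ i ∈ s, f i ≤ ∏ i ∈ s, f i := by
  induction s using Finset.cons_induction with
  | empty => simp
  | cons a s ha ih =>
    rw [sum_cons, prod_cons]
    have ha2 := hf a (mem_cons_self a s)
    have ih := ih fun i hi => hf i (mem_cons_of_mem hi)
    rcases s.eq_empty_or_nonempty with rfl | ⟨j, hj⟩
    · simp
    · have : 2 ≤ ∏ i ∈ s, f i := (hf j (mem_cons_of_mem hj)).trans <|
        single_le_prod' (fun i hi => by linarith [hf i (mem_cons_of_mem hi)]) hj
      nlinarith

theorem sum_le_card_add_prod {ι : Type*} [Fintype ι] [DecidableEq ι] {f : ι → ℕ}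
    (hf : ∀ i, 1 ≤ f i) {c : ι} (hc : ∀ i, f i ≤ f c) :
    ∑ i, f i ≤ #{i | i ≠ c ∧ f i = 1} + ∏ i, f i := by
  rw [← sum_filter_add_sum_filter_not univ (fun i => i ≠ c ∧ f i = 1),
    ← prod_filter_mul_prod_filter_not univ (fun i => i ≠ c ∧ f i = 1),
    prod_eq_one fun i hi => (mem_filter.1 hi).2.2, one_mul,
    sum_congr rfl fun i hi => (mem_filter.1 hi).2.2, sum_const, smul_eq_mul, mul_one]
  gcongr
  rcases (hf c).eq_or_lt with hc1 | hc2
  · calc ∑ i ∈ univ.filter (fun i => ¬(i ≠ c ∧ f i = 1)), f i ≤ ∑ i ∈ {c}, f i := by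
          apply sum_le_sum_of_subset
          intro i hi
          simp only [mem_filter, mem_univ, true_and] at hi
          by_contra hic
          exact hi ⟨fun h => hic (mem_singleton.2 h), by linarith [hc i, hf i]⟩
      _ ≤ _ := by simpa [← hc1] using one_le_prod' fun i _ => hf i
  · apply sum_le_prod_of_two_le
    intro i hi
    simp only [mem_filter, mem_univ, true_and, not_and] at hi
    rcases eq_or_ne i c with rfl | hic
    · exact hc2
    · have := hf i
      have := hi hic
      omega

theorem card_filter_lt_sum {ι : Type*} [Fintype ι] [DecidableEq ι] {f : ι → ℕ}
    (hf : ∀ i, 1 ≤ f i) (c : ι) : #{i | i ≠ c ∧ f i = 1} < ∑ i, f i :=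
  calc #{i | i ≠ c ∧ f i = 1} < #(univ : Finset ι) :=
        card_lt_card (filter_ssubset.2 ⟨c, mem_univ c, by simp⟩)
    _ = ∑ _i, 1 := by simp
    _ ≤ ∑ i, f i := sum_le_sum fun i _ => hf i

theorem statement7_general (P : Type*) [Fintype P] [PartialOrder P]
    (C : (compGraph P).ConnectedComponent)
    (hC : ∀ D : (compGraph P).ConnectedComponent, D.supp.ncard ≤ C.supp.ncard) :
    (extNum P : ℚ) ≤ (Nat.factorial (Fintype.card P) : ℚ) /
      ((Fintype.card P : ℚ) -
        (({D : (compGraph P).ConnectedComponent | D ≠ C ∧ D.supp.ncard = 1}).ncard : ℚ)) := by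
  classical
  let := Fintype.ofFinite (compGraph P).ConnectedComponent
  have hpos : ∀ D : (compGraph P).ConnectedComponent, 1 ≤ D.supp.ncard := fun D =>
    (Set.ncard_pos (Set.toFinite _)).2 D.nonempty_supp
  have hsum := ConnectedComponent.sum_ncard_supp (G := compGraph P)
  have hle := sum_le_card_add_prod hpos hC
  have hlt := card_filter_lt_sum hpos C
  have hext := extNum_mul_prod_ncard_supp_le (P := P)
  simp only [← Set.ncard_coe_finset, coe_filter, mem_univ, true_and, hsum] at hle hlt
  rw [le_div_iff₀ (by rw [sub_pos]; exact_mod_cast hlt)]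
  calc (extNum P : ℚ) * ((Fintype.card P : ℚ) - _)
      ≤ extNum P * ((∏ D : (compGraph P).ConnectedComponent, D.supp.ncard : ℕ) : ℚ) := by
        gcongr
        rw [sub_le_iff_le_add']
        exact_mod_cast hle
    _ ≤ (Fintype.card P).factorial := by exact_mod_cast hext

/-- Let `P` be a finite poset on `n ≥ 1` elements, `C` a connected component of maximal
size, and `m` the number of singleton components other than `C`.
Then `e(P) ≤ n! / (n - m)`. -/
theorem statement7 (P : Type*) [Fintype P] [PartialOrder P]
    (hn : 1 ≤ Fintype.card P)
    (C : (compGraph P).ConnectedComponent)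
    (hC : ∀ D : (compGraph P).ConnectedComponent, D.supp.ncard ≤ C.supp.ncard) :
    (extNum P : ℚ) ≤ (Nat.factorial (Fintype.card P) : ℚ) /
      ((Fintype.card P : ℚ) -
        (({D : (compGraph P).ConnectedComponent | D ≠ C ∧ D.supp.ncard = 1}).ncard : ℚ)) :=
  statement7_general P C hC
end

section
/- For every positive integer n, no poset P on n elements satisfies n!/2 < e(P) < n!; that is, LE(n) contains no integer strictly between n!/2 and n!. -/
/-- `LEset n` is the set of positive integers arising as the number of linear
extensions of some poset with exactly `n` elements. -/
def LEset (n : ℕ) : Set ℕ :=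
  {m | 0 < m ∧ ∃ r : PartialOrder (Fin n), extNum (Fin n) (instO := r) = m}

lemma key (n : ℕ) (r : PartialOrder (Fin n)) :
    extNum (Fin n) (instO := r) = n.factorial ∨
    2 * extNum (Fin n) (instO := r) ≤ n.factorial := by
  classical
  unfold extNum
  set k := Fintype.card (Fin n) with hk
  have hcard : Fintype.card (Fin n ≃ Fin k) = n.factorial := by
    rw [Fintype.card_equiv (Fintype.equivFin (Fin n)), Fintype.card_fin]
  set P : (Fin n ≃ Fin k) → Prop := fun f => ∀ x y : Fin n, r.le x y → f x ≤ f y with hP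
  by_cases htriv : ∀ x y : Fin n, r.le x y → x = y
  · left
    have hall : ∀ f : Fin n ≃ Fin k, P f := by
      intro f x y hxy; rw [htriv x y hxy]
    rw [Nat.card_eq_fintype_card]
    rw [Fintype.card_congr (Equiv.subtypeUnivEquiv hall), hcard]
  · right
    push_neg at htriv
    obtain ⟨a, b, hab, hne⟩ := htriv
    -- injection from {f // P f} into {f // ¬ P f}
    have hinj : ∃ φ : {f // P f} → {f // ¬ P f}, Function.Injective φ := by
      refine ⟨fun f => ⟨f.1.trans (Equiv.swap (f.1 a) (f.1 b)), ?_⟩, ?_⟩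
      · obtain ⟨f, hf⟩ := f
        intro hg
        have h1 : f a < f b := by
          refine lt_of_le_of_ne (hf a b hab) ?_
          intro h; exact hne (f.injective h)
        have h2 := hg a b hab
        simp only [Equiv.trans_apply, Equiv.swap_apply_left, Equiv.swap_apply_right] at h2
        exact absurd h2 (not_le.2 h1)
      · rintro ⟨f1, hf1⟩ ⟨f2, hf2⟩ h
        simp only [Subtype.mk_eq_mk] at h ⊢
        have ha : f1 b = f2 b := by
          have := congrArg (fun e => e.toFun a) h
          simpa using this
        have hb : f1 a = f2 a := by
          have := congrArg (fun e => e.toFun b) h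
          simpa using this
        ext x
        have := congrArg (fun e => e.toFun x) h
        simp only [Equiv.toFun_as_coe, Equiv.trans_apply] at this
        rw [ha, hb] at this
        exact congrArg Fin.val ((Equiv.swap (f2 a) (f2 b)).injective this)
    obtain ⟨φ, hφ⟩ := hinj
    have hle : Fintype.card {f // P f} ≤ Fintype.card {f // ¬ P f} :=
      Fintype.card_le_of_injective φ hφ
    have hcompl : Fintype.card {f // ¬ P f} = n.factorial - Fintype.card {f // P f} := by
      rw [Fintype.card_subtype_compl, hcard]
    have hle2 : Fintype.card {f // P f} ≤ n.factorial := by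
      rw [← hcard]; exact Fintype.card_subtype_le _
    have final : 2 * Fintype.card {f // P f} ≤ n.factorial := by omega
    rw [Nat.card_eq_fintype_card]
    exact final

/-- For every positive integer `n`, `LE(n)` contains no integer strictly between
`n!/2` and `n!`. -/
theorem statement16 (n : ℕ) (hn : 1 ≤ n) (m : ℕ) (hm : m ∈ LEset n) :
    ¬ ((Nat.factorial n : ℚ) / 2 < (m : ℚ) ∧ m < Nat.factorial n) := by
  rintro ⟨h1, h2⟩
  obtain ⟨hm0, r, hr⟩ := hm
  have h2' : m < n.factorial := by exact_mod_cast h2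
  have h1' : (n.factorial : ℚ) < 2 * m := by
    rw [div_lt_iff₀ (by norm_num : (0:ℚ) < 2)] at h1; linarith
  have h1'' : n.factorial < 2 * m := by exact_mod_cast h1'
  rcases key n r with h | h <;> omega
end
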